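/- Let S and A be nonempty finite sets, let γ ∈ [0,1), let π : S → PMF(A) be a policy, let ρ⁰ ∈ PMF(S), and let (P_t)_{t ∈ ℕ} and (r_t)_{t ∈ ℕ} be sequences of transition kernels P_t : S → A → PMF(S) and reward functions r_t : S × A → [0,1] such that for every t ∈ ℕ, s ∈ S, a ∈ A: Σ_{s' ∈ S} |P_t(s,a)(s') − P_{t+1}(s,a)(s')| ≤ L_P and |r_t(s,a) − r_{t+1}(s,a)| ≤ L_r, with L_P, L_r ≥ 0. Let J(π, t) denote the expected discounted return of π in the stationary MDP with kernel P_t and reward r_t, i.e. J(π, t) = Σ_{k=0}^{∞} γ^k · Σ_s μ_k^t(s) · Σ_a π(s)(a) · r_t(s,a) with μ₀^t = ρ⁰ and μ_{k+1}^t(s') = Σ_s μ_k^t(s) · Σ_a π(s)(a) · P_t(s,a)(s'). Then for all t₀ ∈ ℕ and t ∈ ℕ, |J(π, t₀) − J(π, t₀ + t)| ≤ L' · t, where L' = γ·L_P/(1−γ)² + L_r/(1−γ). -/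

import Mathlib

noncomputable section

/-- Policy-mixed one-step state-to-state kernel: `K^π(s'|s) = ∑_a π(s)(a) · K(s,a)(s')`. -/
def kerPi {S A : Type*} [Fintype A] (π : S → PMF A) (K : S → A → PMF S)
    (s s' : S) : ℝ :=
  ∑ a : A, ((π s) a).toReal * ((K s a) s').toReal

/-- State distribution at time step `k` under policy `π`, kernel `K` and initial
distribution `ρ`: `μ₀ = ρ`, `μ_{k+1}(s') = ∑_s μ_k(s) · ∑_a π(s)(a) · K(s,a)(s')`. -/
def stateDist {S A : Type*} [Fintype S] [Fintype A] (π : S → PMF A)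
    (K : S → A → PMF S) (ρ : PMF S) : ℕ → S → ℝ
  | 0 => fun s => (ρ s).toReal
  | (k + 1) => fun s' => ∑ s : S, stateDist π K ρ k s * kerPi π K s s'

/-- Discounted state occupancy measure `d^π(s) = (1-γ) ∑_{k≥0} γ^k μ_k(s)`. -/
def occ {S A : Type*} [Fintype S] [Fintype A] (γ : ℝ) (π : S → PMF A)
    (K : S → A → PMF S) (ρ : PMF S) (s : S) : ℝ :=
  (1 - γ) * ∑' k : ℕ, γ ^ k * stateDist π K ρ k s

/-- Expected discounted return
`J(π, K, r) = ∑_{k≥0} γ^k ∑_s μ_k(s) ∑_a π(s)(a) r(s,a)`. -/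
def ret {S A : Type*} [Fintype S] [Fintype A] (γ : ℝ) (π : S → PMF A)
    (K : S → A → PMF S) (ρ : PMF S) (r : S × A → ℝ) : ℝ :=
  ∑' k : ℕ, γ ^ k * ∑ s : S, stateDist π K ρ k s * ∑ a : A, ((π s) a).toReal * r (s, a)

/-!
Mixing with a stochastic kernel does not increase ℓ¹ distances, so if two kernels are `L_P`
apart row by row, the ℓ¹ distance between their `k`-step state distributions grows by at most
`L_P` per step, and the expected rewards at step `k` differ by at most `k L_P + L_r`. Summing
against `γ^k`, with `∑ₖ k γ^k = γ/(1-γ)²`, bounds the change of the return between consecutive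
episodes by `L'`; the triangle inequality along `t₀, …, t₀ + t` gives the claim.
-/

open Finset

section WeightedSums

variable {ι κ : Type*} [Fintype ι] [Fintype κ]

theorem sum_abs_sum_mul_le (w : ι → ℝ) (D : ι → κ → ℝ) :
    ∑ j, |∑ i, w i * D i j| ≤ ∑ i, |w i| * ∑ j, |D i j| :=
  calc ∑ j, |∑ i, w i * D i j|
      ≤ ∑ j, ∑ i, |w i| * |D i j| :=
        sum_le_sum fun j _ => (abs_sum_le_sum_abs _ _).trans_eq (by simp only [abs_mul])
    _ = ∑ i, |w i| * ∑ j, |D i j| := by rw [sum_comm]; simp only [mul_sum]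

theorem sum_abs_sum_mul_le_of_forall_le {w : ι → ℝ} {D : ι → κ → ℝ} {c : ℝ}
    (hw₀ : ∀ i, 0 ≤ w i) (hw₁ : ∑ i, w i = 1) (hD : ∀ i, ∑ j, |D i j| ≤ c) :
    ∑ j, |∑ i, w i * D i j| ≤ c :=
  calc ∑ j, |∑ i, w i * D i j|
      ≤ ∑ i, w i * c := (sum_abs_sum_mul_le w D).trans <| sum_le_sum fun i _ => by
        rw [abs_of_nonneg (hw₀ i)]
        exact mul_le_mul_of_nonneg_left (hD i) (hw₀ i)
    _ = c := by rw [← sum_mul, hw₁, one_mul]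

theorem abs_sum_mul_le_of_forall_abs_le {w d : ι → ℝ} {c : ℝ}
    (hw₀ : ∀ i, 0 ≤ w i) (hw₁ : ∑ i, w i = 1) (hd : ∀ i, |d i| ≤ c) :
    |∑ i, w i * d i| ≤ c := by
  simpa using sum_abs_sum_mul_le_of_forall_le (κ := Unit) (D := fun i _ => d i) hw₀ hw₁
    (by simpa using hd)

theorem sum_abs_sum_mul_sub_sum_mul_le {p q : ι → ℝ} {M N : ι → κ → ℝ} {δ : ℝ}
    (hq₀ : ∀ i, 0 ≤ q i) (hq₁ : ∑ i, q i = 1) (hM : ∀ i, ∑ j, |M i j| ≤ 1)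
    (hMN : ∀ i, ∑ j, |M i j - N i j| ≤ δ) :
    ∑ j, |∑ i, p i * M i j - ∑ i, q i * N i j| ≤ ∑ i, |p i - q i| + δ := by
  have hsplit : ∀ j, ∑ i, p i * M i j - ∑ i, q i * N i j
      = ∑ i, (p i - q i) * M i j + ∑ i, q i * (M i j - N i j) := fun j => by
    simp only [← sum_sub_distrib, ← sum_add_distrib]; congr! 1; ring
  calc ∑ j, |∑ i, p i * M i j - ∑ i, q i * N i j|
      ≤ ∑ j, |∑ i, (p i - q i) * M i j| + ∑ j, |∑ i, q i * (M i j - N i j)| := by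
        rw [← sum_add_distrib]
        exact sum_le_sum fun j _ => by rw [hsplit]; exact abs_add_le _ _
    _ ≤ ∑ i, |p i - q i| * 1 + δ := by
        gcongr
        · exact (sum_abs_sum_mul_le _ _).trans (sum_le_sum fun i _ => by gcongr; exact hM i)
        · exact sum_abs_sum_mul_le_of_forall_le hq₀ hq₁ hMN
    _ = ∑ i, |p i - q i| + δ := by simp only [mul_one]

theorem abs_sum_mul_sub_sum_mul_le {p q a b : ι → ℝ} {δ : ℝ}
    (hq₀ : ∀ i, 0 ≤ q i) (hq₁ : ∑ i, q i = 1) (ha : ∀ i, |a i| ≤ 1)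
    (hab : ∀ i, |a i - b i| ≤ δ) :
    |∑ i, p i * a i - ∑ i, q i * b i| ≤ ∑ i, |p i - q i| + δ := by
  simpa using sum_abs_sum_mul_sub_sum_mul_le (κ := Unit) (p := p) (M := fun i _ => a i)
    (N := fun i _ => b i) hq₀ hq₁ (by simpa using ha) (by simpa using hab)

end WeightedSums

theorem summable_geometric_mul_of_abs_le_one {γ : ℝ} (hγ₀ : 0 ≤ γ) (hγ₁ : γ < 1) {a : ℕ → ℝ}
    (ha : ∀ k, |a k| ≤ 1) : Summable fun k => γ ^ k * a k :=
  .of_norm_bounded (summable_geometric_of_lt_one hγ₀ hγ₁) fun k => by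
    rw [norm_mul, norm_pow, Real.norm_of_nonneg hγ₀, Real.norm_eq_abs]
    exact mul_le_of_le_one_right (pow_nonneg hγ₀ k) (ha k)

theorem abs_tsum_geometric_mul_sub_le {γ α β : ℝ} (hγ₀ : 0 ≤ γ) (hγ₁ : γ < 1) {a b : ℕ → ℝ}
    (ha : Summable fun k => γ ^ k * a k) (hb : Summable fun k => γ ^ k * b k)
    (hab : ∀ k, |a k - b k| ≤ k * α + β) :
    |∑' k, γ ^ k * a k - ∑' k, γ ^ k * b k| ≤ γ * α / (1 - γ) ^ 2 + β / (1 - γ) := by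
  have hγ : ‖γ‖ < 1 := by rwa [Real.norm_of_nonneg hγ₀]
  have hsum : HasSum (fun k : ℕ => k * γ ^ k * α + γ ^ k * β)
      (γ / (1 - γ) ^ 2 * α + (1 - γ)⁻¹ * β) :=
    ((hasSum_coe_mul_geometric_of_norm_lt_one hγ).mul_right α).add
      ((hasSum_geometric_of_lt_one hγ₀ hγ₁).mul_right β)
  rw [← ha.tsum_sub hb, ← Real.norm_eq_abs]
  refine (tsum_of_norm_bounded hsum fun k => ?_).trans_eq (by ring)
  calc ‖γ ^ k * a k - γ ^ k * b k‖ = γ ^ k * |a k - b k| := by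
        rw [← mul_sub, norm_mul, norm_pow, Real.norm_of_nonneg hγ₀, Real.norm_eq_abs]
    _ ≤ γ ^ k * (k * α + β) := by gcongr; exact hab k
    _ = k * γ ^ k * α + γ ^ k * β := by ring

theorem PMF.sum_toReal_eq_one {X : Type*} [Fintype X] (p : PMF X) :
    ∑ x, (p x).toReal = 1 := by
  rw [← ENNReal.toReal_sum fun x _ => p.apply_ne_top x,
    ← tsum_fintype (L := .unconditional X), p.tsum_coe, ENNReal.toReal_one]

def rewardPi {S A : Type*} [Fintype A] (π : S → PMF A) (r : S × A → ℝ) (s : S) : ℝ :=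
  ∑ a, (π s a).toReal * r (s, a)

def expectedReward {S A : Type*} [Fintype S] [Fintype A] (π : S → PMF A)
    (K : S → A → PMF S) (ρ : PMF S) (r : S × A → ℝ) (k : ℕ) : ℝ :=
  ∑ s, stateDist π K ρ k s * rewardPi π r s

section MDP

variable {S A : Type*} [Fintype A] (π : S → PMF A)

theorem kerPi_nonneg (K : S → A → PMF S) (s s' : S) : 0 ≤ kerPi π K s s' := by
  unfold kerPi; positivity

theorem abs_rewardPi_le_one {r : S × A → ℝ} (hr : ∀ x, |r x| ≤ 1) (s : S) :
    |rewardPi π r s| ≤ 1 :=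
  abs_sum_mul_le_of_forall_abs_le (fun _ => ENNReal.toReal_nonneg)
    (PMF.sum_toReal_eq_one _) (fun a => hr (s, a))

theorem abs_rewardPi_sub_le {r₁ r₂ : S × A → ℝ} {L : ℝ}
    (hr : ∀ s a, |r₁ (s, a) - r₂ (s, a)| ≤ L) (s : S) :
    |rewardPi π r₁ s - rewardPi π r₂ s| ≤ L := by
  simp only [rewardPi, ← sum_sub_distrib, ← mul_sub]
  exact abs_sum_mul_le_of_forall_abs_le (fun _ => ENNReal.toReal_nonneg)
    (PMF.sum_toReal_eq_one _) (hr s)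

variable [Fintype S]

theorem sum_kerPi (K : S → A → PMF S) (s : S) : ∑ s', kerPi π K s s' = 1 := by
  simp only [kerPi]
  rw [sum_comm]
  simp only [← mul_sum, PMF.sum_toReal_eq_one, mul_one]

theorem sum_abs_kerPi (K : S → A → PMF S) (s : S) : ∑ s', |kerPi π K s s'| = 1 := by
  simp only [abs_of_nonneg (kerPi_nonneg π K s _), sum_kerPi]

theorem sum_abs_kerPi_sub_le {K₁ K₂ : S → A → PMF S} {L : ℝ}
    (hK : ∀ s a, ∑ s', |(K₁ s a s').toReal - (K₂ s a s').toReal| ≤ L) (s : S) :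
    ∑ s', |kerPi π K₁ s s' - kerPi π K₂ s s'| ≤ L := by
  simp only [kerPi, ← sum_sub_distrib, ← mul_sub]
  exact sum_abs_sum_mul_le_of_forall_le (fun _ => ENNReal.toReal_nonneg)
    (PMF.sum_toReal_eq_one _) (hK s)

variable (K : S → A → PMF S) (ρ : PMF S)

theorem stateDist_nonneg (k : ℕ) (s : S) : 0 ≤ stateDist π K ρ k s := by
  induction k generalizing s with
  | zero => exact ENNReal.toReal_nonneg
  | succ k ih => exact sum_nonneg fun s' _ => mul_nonneg (ih s') (kerPi_nonneg π K s' s)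

theorem sum_stateDist (k : ℕ) : ∑ s, stateDist π K ρ k s = 1 := by
  induction k with
  | zero => exact PMF.sum_toReal_eq_one ρ
  | succ k ih =>
    simp only [stateDist]
    rw [sum_comm]
    simp only [← mul_sum, sum_kerPi, mul_one, ih]

theorem sum_abs_stateDist_sub_le {K₁ K₂ : S → A → PMF S} {L : ℝ}
    (hK : ∀ s a, ∑ s', |(K₁ s a s').toReal - (K₂ s a s').toReal| ≤ L) (k : ℕ) :
    ∑ s, |stateDist π K₁ ρ k s - stateDist π K₂ ρ k s| ≤ k * L := by
  induction k with
  | zero => simp [stateDist]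
  | succ k ih =>
    calc ∑ s', |stateDist π K₁ ρ (k + 1) s' - stateDist π K₂ ρ (k + 1) s'|
        ≤ ∑ s, |stateDist π K₁ ρ k s - stateDist π K₂ ρ k s| + L :=
          sum_abs_sum_mul_sub_sum_mul_le (stateDist_nonneg π K₂ ρ k) (sum_stateDist π K₂ ρ k)
            (fun s => (sum_abs_kerPi π K₁ s).le) (sum_abs_kerPi_sub_le π hK)
      _ ≤ (k + 1 : ℕ) * L := by push_cast; linarith

theorem abs_expectedReward_le_one {r : S × A → ℝ} (hr : ∀ x, |r x| ≤ 1) (k : ℕ) :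
    |expectedReward π K ρ r k| ≤ 1 :=
  abs_sum_mul_le_of_forall_abs_le (stateDist_nonneg π K ρ k) (sum_stateDist π K ρ k)
    (abs_rewardPi_le_one π hr)

theorem abs_expectedReward_sub_le {K₁ K₂ : S → A → PMF S} {r₁ r₂ : S × A → ℝ} {L_P L_r : ℝ}
    (hK : ∀ s a, ∑ s', |(K₁ s a s').toReal - (K₂ s a s').toReal| ≤ L_P)
    (hr₁ : ∀ x, |r₁ x| ≤ 1) (hr : ∀ s a, |r₁ (s, a) - r₂ (s, a)| ≤ L_r) (k : ℕ) :
    |expectedReward π K₁ ρ r₁ k - expectedReward π K₂ ρ r₂ k| ≤ k * L_P + L_r :=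
  (abs_sum_mul_sub_sum_mul_le (stateDist_nonneg π K₂ ρ k) (sum_stateDist π K₂ ρ k)
    (abs_rewardPi_le_one π hr₁) (abs_rewardPi_sub_le π hr)).trans
    (by gcongr; exact sum_abs_stateDist_sub_le π ρ hK k)

theorem abs_ret_sub_ret_le {γ : ℝ} (hγ₀ : 0 ≤ γ) (hγ₁ : γ < 1) {K₁ K₂ : S → A → PMF S}
    {r₁ r₂ : S × A → ℝ} {L_P L_r : ℝ} (hr₁ : ∀ x, |r₁ x| ≤ 1) (hr₂ : ∀ x, |r₂ x| ≤ 1)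
    (hK : ∀ s a, ∑ s', |(K₁ s a s').toReal - (K₂ s a s').toReal| ≤ L_P)
    (hr : ∀ s a, |r₁ (s, a) - r₂ (s, a)| ≤ L_r) :
    |ret γ π K₁ ρ r₁ - ret γ π K₂ ρ r₂| ≤ γ * L_P / (1 - γ) ^ 2 + L_r / (1 - γ) :=
  abs_tsum_geometric_mul_sub_le hγ₀ hγ₁
    (summable_geometric_mul_of_abs_le_one hγ₀ hγ₁ (abs_expectedReward_le_one π K₁ ρ hr₁))
    (summable_geometric_mul_of_abs_le_one hγ₀ hγ₁ (abs_expectedReward_le_one π K₂ ρ hr₂))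
    (abs_expectedReward_sub_le π ρ hK hr₁ hr)

end MDP

theorem ret_lipschitz_in_time_general {S A : Type*} [Fintype S] [Fintype A]
    (γ : ℝ) (hγ0 : 0 ≤ γ) (hγ1 : γ < 1)
    (π : S → PMF A) (ρ : PMF S)
    (P : ℕ → S → A → PMF S) (r : ℕ → S × A → ℝ)
    (hr01 : ∀ t : ℕ, ∀ x, r t x ∈ Set.Icc (0 : ℝ) 1)
    (L_P L_r : ℝ)
    (hP : ∀ t : ℕ, ∀ s : S, ∀ a : A,
      ∑ s' : S, |((P t s a) s').toReal - ((P (t + 1) s a) s').toReal| ≤ L_P)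
    (hr : ∀ t : ℕ, ∀ s : S, ∀ a : A, |r t (s, a) - r (t + 1) (s, a)| ≤ L_r) :
    ∀ t₀ t : ℕ,
      |ret γ π (P t₀) ρ (r t₀) - ret γ π (P (t₀ + t)) ρ (r (t₀ + t))| ≤
        (γ * L_P / (1 - γ) ^ 2 + L_r / (1 - γ)) * t := by
  intro t₀ t
  have hr_abs : ∀ t x, |r t x| ≤ 1 := fun t x =>
    abs_le.2 ⟨by linarith [(hr01 t x).1], (hr01 t x).2⟩
  calc |ret γ π (P t₀) ρ (r t₀) - ret γ π (P (t₀ + t)) ρ (r (t₀ + t))|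
      ≤ ∑ _k ∈ Ico t₀ (t₀ + t), (γ * L_P / (1 - γ) ^ 2 + L_r / (1 - γ)) :=
        dist_le_Ico_sum_of_dist_le (f := fun k => ret γ π (P k) ρ (r k)) (by omega) fun _ _ =>
          abs_ret_sub_ret_le π ρ hγ0 hγ1 (hr_abs _) (hr_abs _) (hP _) (hr _)
    _ = (γ * L_P / (1 - γ) ^ 2 + L_r / (1 - γ)) * t := by
      rw [sum_const, Nat.card_Ico, add_tsub_cancel_left, nsmul_eq_mul, mul_comm]

/-- For a time-constrained (Lipschitz) sequence of stationary MDPs, the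
expected discounted return of a fixed policy varies at most linearly in time:
`|J(π, t₀) - J(π, t₀+t)| ≤ L' t` with `L' = γ L_P/(1-γ)² + L_r/(1-γ)`. -/
theorem ret_lipschitz_in_time {S A : Type*} [Fintype S] [Fintype A] [Nonempty S] [Nonempty A]
    (γ : ℝ) (hγ0 : 0 ≤ γ) (hγ1 : γ < 1)
    (π : S → PMF A) (ρ : PMF S)
    (P : ℕ → S → A → PMF S) (r : ℕ → S × A → ℝ)
    (hr01 : ∀ t : ℕ, ∀ x, r t x ∈ Set.Icc (0 : ℝ) 1)
    (L_P L_r : ℝ) (hLP : 0 ≤ L_P) (hLr : 0 ≤ L_r)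
    (hP : ∀ t : ℕ, ∀ s : S, ∀ a : A,
      ∑ s' : S, |((P t s a) s').toReal - ((P (t + 1) s a) s').toReal| ≤ L_P)
    (hr : ∀ t : ℕ, ∀ s : S, ∀ a : A, |r t (s, a) - r (t + 1) (s, a)| ≤ L_r) :
    ∀ t₀ t : ℕ,
      |ret γ π (P t₀) ρ (r t₀) - ret γ π (P (t₀ + t)) ρ (r (t₀ + t))| ≤
        (γ * L_P / (1 - γ) ^ 2 + L_r / (1 - γ)) * t :=
  ret_lipschitz_in_time_general γ hγ0 hγ1 π ρ P r hr01 L_P L_r hP hr
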